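/- Let h : 𝔤* × V* × V → ℝ be differentiable and define H : 𝔤* × V* × V → ℝ by H(M, σ, n) := h(M − σ ⋄ n, σ, n). Fix (M, σ, n), set μ := M − σ ⋄ n, and let u ∈ 𝔤 be the unique element representing the partial derivative D_M H(M,σ,n), i.e. D_M H(M,σ,n)(β) = β(u) for all β ∈ 𝔤*. Then: (i) D_μ h(μ,σ,n) = D_M H(M,σ,n) as elements of (𝔤*)*; (ii) for every w ∈ V*, D_σ h(μ,σ,n)(w) = D_σ H(M,σ,n)(w) − w(u·n); (iii) D_n h(μ,σ,n) = D_n H(M,σ,n) − u ⋆ σ in V*. (These are the variational-derivative relations effecting the untangling change of variables M = μ + σ ⋄ n.) -/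

import Mathlib

open Module

variable {G V : Type*}
  [NormedAddCommGroup G] [NormedSpace ℝ G] [FiniteDimensional ℝ G]
  [NormedAddCommGroup V] [NormedSpace ℝ V] [FiniteDimensional ℝ V]

/-- The diamond operator `⋄ : V* × V → 𝔤*`, `⟨σ ⋄ v, u⟩ = -⟨σ, u·v⟩`, where the
`𝔤`-action on `V` is given by the bilinear map `ρ`. -/
noncomputable def dia (ρ : G →ₗ[ℝ] V →ₗ[ℝ] V) (σ : V →L[ℝ] ℝ) (v : V) : G →L[ℝ] ℝ :=
  LinearMap.toContinuousLinearMap (-((σ : V →ₗ[ℝ] ℝ) ∘ₗ (ρ.flip v)))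

/-- The star operator `⋆ : 𝔤 × V* → V*`, `⟨u ⋆ σ, v⟩ = ⟨σ, u·v⟩`. -/
noncomputable def starOp (ρ : G →ₗ[ℝ] V →ₗ[ℝ] V) (u : G) (σ : V →L[ℝ] ℝ) : V →L[ℝ] ℝ :=
  LinearMap.toContinuousLinearMap ((σ : V →ₗ[ℝ] ℝ) ∘ₗ (ρ u))

lemma dia_apply (ρ : G →ₗ[ℝ] V →ₗ[ℝ] V) (σ : V →L[ℝ] ℝ) (v : V) (u : G) :
    dia ρ σ v u = -(σ (ρ u v)) := by simp [dia]

lemma starOp_apply (ρ : G →ₗ[ℝ] V →ₗ[ℝ] V) (u : G) (σ : V →L[ℝ] ℝ) (v : V) :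
    starOp ρ u σ v = σ (ρ u v) := by simp [starOp]

noncomputable def diaL (ρ : G →ₗ[ℝ] V →ₗ[ℝ] V) (n : V) :
    (V →L[ℝ] ℝ) →L[ℝ] (G →L[ℝ] ℝ) :=
  LinearMap.toContinuousLinearMap
    { toFun := fun σ => dia ρ σ n
      map_add' := by intro a b; ext u; simp [dia_apply]; ring
      map_smul' := by intro c a; ext u; simp [dia_apply, mul_comm] }

@[simp] lemma diaL_apply (ρ : G →ₗ[ℝ] V →ₗ[ℝ] V) (n : V) (σ : V →L[ℝ] ℝ) :
    diaL ρ n σ = dia ρ σ n := rfl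

noncomputable def diaR (ρ : G →ₗ[ℝ] V →ₗ[ℝ] V) (σ : V →L[ℝ] ℝ) :
    V →L[ℝ] (G →L[ℝ] ℝ) :=
  LinearMap.toContinuousLinearMap
    { toFun := fun v => dia ρ σ v
      map_add' := by intro a b; ext u; simp [dia_apply]; ring
      map_smul' := by intro c a; ext u; simp [dia_apply, mul_comm] }

@[simp] lemma diaR_apply (ρ : G →ₗ[ℝ] V →ₗ[ℝ] V) (σ : V →L[ℝ] ℝ) (v : V) :
    diaR ρ σ v = dia ρ σ v := rfl

set_option maxHeartbeats 1000000 in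
/-- Variational-derivative relations for the untangling change of variables
`M = μ + σ ⋄ n`, i.e. `H(M,σ,n) := h(M − σ ⋄ n, σ, n)`: with `μ := M − σ ⋄ n` and
`u` the representative of `D_M H(M,σ,n)`,
(i) `D_μ h(μ,σ,n) = D_M H(M,σ,n)`;
(ii) `D_σ h(μ,σ,n)(w) = D_σ H(M,σ,n)(w) − ⟨w, u·n⟩` for all `w ∈ V*`;
(iii) `D_n h(μ,σ,n) = D_n H(M,σ,n) − u ⋆ σ`. -/
theorem untangling_variational_derivatives
    (ρ : G →ₗ[ℝ] V →ₗ[ℝ] V)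
    (h : (G →L[ℝ] ℝ) × (V →L[ℝ] ℝ) × V → ℝ) (hh : Differentiable ℝ h)
    (H : (G →L[ℝ] ℝ) × (V →L[ℝ] ℝ) × V → ℝ)
    (hH : ∀ (M : G →L[ℝ] ℝ) (σ : V →L[ℝ] ℝ) (n : V),
      H (M, σ, n) = h (M - dia ρ σ n, σ, n))
    (M : G →L[ℝ] ℝ) (σ : V →L[ℝ] ℝ) (n : V) (u : G)
    (hu : ∀ β : G →L[ℝ] ℝ, fderiv ℝ (fun M' => H (M', σ, n)) M β = β u) :
    (fderiv ℝ (fun μ' => h (μ', σ, n)) (M - dia ρ σ n)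
        = fderiv ℝ (fun M' => H (M', σ, n)) M)
    ∧ (∀ w : V →L[ℝ] ℝ,
        fderiv ℝ (fun σ' => h (M - dia ρ σ n, σ', n)) σ w
          = fderiv ℝ (fun σ' => H (M, σ', n)) σ w - w (ρ u n))
    ∧ (fderiv ℝ (fun n' => h (M - dia ρ σ n, σ, n')) n
        = fderiv ℝ (fun n' => H (M, σ, n')) n - starOp ρ u σ) := by
  classical
  set c := dia ρ σ n with hc
  set μ := M - c with hμ
  have hD : HasFDerivAt h (fderiv ℝ h (μ, σ, n)) (μ, σ, n) := (hh _).hasFDerivAt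
  set D := fderiv ℝ h (μ, σ, n) with hDdef
  -- partial derivative of h in the first slot
  have h1 : HasFDerivAt (fun μ' => h (μ', σ, n))
      (D.comp ((ContinuousLinearMap.id ℝ (G →L[ℝ] ℝ)).prod 0)) μ :=
    hD.comp μ (HasFDerivAt.prodMk (hasFDerivAt_id μ) (hasFDerivAt_const (σ, n) μ))
  -- partial derivative of H in the first slot
  have hfunM : (fun M' => H (M', σ, n)) = fun M' => h (M' - c, σ, n) :=
    funext fun M' => hH M' σ n
  have h2 : HasFDerivAt (fun M' => H (M', σ, n))
      (D.comp ((ContinuousLinearMap.id ℝ (G →L[ℝ] ℝ)).prod 0)) M := by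
    rw [hfunM]
    exact hD.comp M (HasFDerivAt.prodMk ((hasFDerivAt_id M).sub_const c) (hasFDerivAt_const (σ, n) M))
  have hu' : ∀ β : G →L[ℝ] ℝ, D (β, 0, 0) = β u := by
    intro β
    have := hu β
    rw [h2.fderiv] at this
    simp at this
    exact this
  refine ⟨by rw [h1.fderiv, h2.fderiv], ?_, ?_⟩
  · -- σ-slot
    intro w
    have h3 : HasFDerivAt (fun σ' => H (M, σ', n))
        (D.comp (((0 : (V →L[ℝ] ℝ) →L[ℝ] (G →L[ℝ] ℝ)) - diaL ρ n).prod
          ((ContinuousLinearMap.id ℝ (V →L[ℝ] ℝ)).prod 0))) σ := by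
      have hfunσ : (fun σ' => H (M, σ', n)) = fun σ' => h (M - dia ρ σ' n, σ', n) :=
        funext fun σ' => hH M σ' n
      rw [hfunσ]
      have hfst : HasFDerivAt (fun σ' => M - dia ρ σ' n)
          ((0 : (V →L[ℝ] ℝ) →L[ℝ] (G →L[ℝ] ℝ)) - diaL ρ n) σ := by
        exact (hasFDerivAt_const M σ).sub ((diaL ρ n).hasFDerivAt (x := σ))
      exact hD.comp σ (HasFDerivAt.prodMk hfst (HasFDerivAt.prodMk (hasFDerivAt_id σ) (hasFDerivAt_const n σ)))
    have h4 : HasFDerivAt (fun σ' => h (μ, σ', n))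
        (D.comp ((0 : (V →L[ℝ] ℝ) →L[ℝ] (G →L[ℝ] ℝ)).prod
          ((ContinuousLinearMap.id ℝ (V →L[ℝ] ℝ)).prod 0))) σ :=
      hD.comp σ (HasFDerivAt.prodMk (hasFDerivAt_const μ σ) (HasFDerivAt.prodMk (hasFDerivAt_id σ) (hasFDerivAt_const n σ)))
    rw [h3.fderiv, h4.fderiv]
    have split : ((-(dia ρ w n), (w, (0 : V))) : (G →L[ℝ] ℝ) × (V →L[ℝ] ℝ) × V)
        = (-(dia ρ w n), (0, 0)) + (0, (w, 0)) := by simp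
    have : D (-(dia ρ w n), (w, 0)) = D (-(dia ρ w n), (0,0)) + D (0, (w, 0)) := by
      rw [split, map_add]
    simp only [ContinuousLinearMap.comp_apply, ContinuousLinearMap.prod_apply,
      ContinuousLinearMap.sub_apply, ContinuousLinearMap.zero_apply,
      ContinuousLinearMap.id_apply, diaL_apply, zero_sub, ContinuousLinearMap.neg_apply]
    rw [this, hu' (-(dia ρ w n))]
    simp only [ContinuousLinearMap.neg_apply, dia_apply, neg_neg]
    ring
  · -- n-slot
    ext v
    have h5 : HasFDerivAt (fun n' => H (M, σ, n'))
        (D.comp (((0 : V →L[ℝ] (G →L[ℝ] ℝ)) - diaR ρ σ).prod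
          ((0 : V →L[ℝ] (V →L[ℝ] ℝ)).prod (ContinuousLinearMap.id ℝ V)))) n := by
      have hfunn : (fun n' => H (M, σ, n')) = fun n' => h (M - dia ρ σ n', σ, n') :=
        funext fun n' => hH M σ n'
      rw [hfunn]
      have hfst : HasFDerivAt (fun n' => M - dia ρ σ n')
          ((0 : V →L[ℝ] (G →L[ℝ] ℝ)) - diaR ρ σ) n := by
        exact (hasFDerivAt_const M n).sub ((diaR ρ σ).hasFDerivAt (x := n))
      exact hD.comp n (HasFDerivAt.prodMk hfst (HasFDerivAt.prodMk (hasFDerivAt_const σ n) (hasFDerivAt_id n)))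
    have h6 : HasFDerivAt (fun n' => h (μ, σ, n'))
        (D.comp ((0 : V →L[ℝ] (G →L[ℝ] ℝ)).prod
          ((0 : V →L[ℝ] (V →L[ℝ] ℝ)).prod (ContinuousLinearMap.id ℝ V)))) n :=
      hD.comp n (HasFDerivAt.prodMk (hasFDerivAt_const μ n) (HasFDerivAt.prodMk (hasFDerivAt_const σ n) (hasFDerivAt_id n)))
    rw [h5.fderiv, h6.fderiv]
    have split : ((-(dia ρ σ v), ((0 : V →L[ℝ] ℝ), v)) : (G →L[ℝ] ℝ) × (V →L[ℝ] ℝ) × V)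
        = (-(dia ρ σ v), (0, 0)) + (0, (0, v)) := by
      rw [Prod.mk_add_mk, Prod.mk_add_mk, add_zero, add_zero, zero_add]
    have : D (-(dia ρ σ v), (0, v)) = D (-(dia ρ σ v), (0,0)) + D (0, (0, v)) := by
      rw [split, map_add]
    simp only [ContinuousLinearMap.comp_apply, ContinuousLinearMap.prod_apply,
      ContinuousLinearMap.sub_apply, ContinuousLinearMap.zero_apply,
      ContinuousLinearMap.id_apply, diaR_apply, zero_sub, ContinuousLinearMap.neg_apply]
    rw [this, hu' (-(dia ρ σ v))]
    simp only [ContinuousLinearMap.neg_apply, dia_apply, starOp_apply, neg_neg]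
    ring
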